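/- Suppose d' is a continuous metric on X (i.e., the identity map (X,d) → (X,d') is continuous) such that μ has bounded complexity with respect to {d̄'_{F_n} : n ∈ ℕ}. Then for every continuous semimetric ρ on X, μ has bounded complexity with respect to {ρ̄_{F_n} : n ∈ ℕ}. -/

import Mathlib

open MeasureTheory Filter Topology Set
open scoped Pointwise ENNReal symmDiff BigOperators

/-- The averaged semimetric `w̄_F(x,y) = (1/|F|) ∑_{g ∈ F} w(gx, gy)`. -/
noncomputable def avgMetric {G X : Type*} [SMul G X] (F : Finset G) (w : X → X → ℝ)
    (x y : X) : ℝ :=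
  (∑ g ∈ F, w (g • x) (g • y)) / F.card

/-- `F` is a Følner sequence: each `F n` is nonempty and `|gF_n Δ F_n|/|F_n| → 0` for all `g`. -/
def FolnerSeq {G : Type*} [Group G] [DecidableEq G] (F : ℕ → Finset G) : Prop :=
  (∀ n, (F n).Nonempty) ∧
    ∀ g : G, Tendsto (fun n => (((g • F n) ∆ F n).card : ℝ) / ((F n).card : ℝ)) atTop (𝓝 0)

/-- `F` is tempered: `|⋃_{k<n} F_k⁻¹ F_n| ≤ C |F_n|` for some `C > 0` and all `n`. -/
def TemperedSeq {G : Type*} [Group G] [DecidableEq G] (F : ℕ → Finset G) : Prop :=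
  ∃ C : ℝ, 0 < C ∧ ∀ n : ℕ,
    ((((Finset.range n).biUnion fun k => (F k)⁻¹ * F n)).card : ℝ) ≤ C * ((F n).card : ℝ)

/-- `μ` has bounded complexity w.r.t. `{w̄_{F_n}}`: for every `ε > 0` there is a uniform bound
`M` such that for every `n` there are at most `M` points whose `ε/2`-balls in the metric
`w̄_{F_n}` cover `X` up to measure `ε`. -/
def BoundedComplexity {G X : Type*} [SMul G X] [MeasurableSpace X]
    (μ : Measure X) (F : ℕ → Finset G) (w : X → X → ℝ) : Prop :=
  ∀ ε : ℝ, 0 < ε → ∃ M : ℕ, ∀ n : ℕ, ∃ s : Finset X, s.card ≤ M ∧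
    (μ {y : X | ∃ x ∈ s, avgMetric (F n) w x y < ε / 2}).toReal > 1 - ε

/-- `h` is almost periodic in `L²(μ)`: its `G`-orbit `{h ∘ g}` is totally bounded (equivalently,
precompact) in `L²(μ)`. -/
def AlmostPeriodic (G : Type*) {X : Type*} [SMul G X] [MeasurableSpace X]
    (μ : Measure X) (h : X → ℝ) : Prop :=
  ∀ ε : ℝ, 0 < ε → ∃ S : Finset G, ∀ g : G, ∃ g' ∈ S,
    eLpNorm (fun x => h (g • x) - h (g' • x)) 2 μ < ENNReal.ofReal ε

/-- `μ` has discrete spectrum: every (Borel) function in `L²(X, μ)` is almost periodic. -/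
def DiscreteSpectrum (G : Type*) {X : Type*} [SMul G X] [MeasurableSpace X]
    (μ : Measure X) : Prop :=
  ∀ h : X → ℝ, Measurable h → MemLp h 2 μ → AlmostPeriodic G μ h

variable {X : Type*} [MetricSpace X] [CompactSpace X] [MeasurableSpace X] [BorelSpace X]
variable {G : Type*} [Group G] [Countable G] [Infinite G] [DecidableEq G]
variable [MulAction G X] [ContinuousConstSMul G X]

/-- `ρ` is a semimetric: vanishing on the diagonal, symmetric, triangle inequality. -/
def IsSemimetric {X : Type*} (ρ : X → X → ℝ) : Prop :=
  (∀ x, ρ x x = 0) ∧ (∀ x y, ρ x y = ρ y x) ∧ (∀ x y z, ρ x z ≤ ρ x y + ρ y z)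

/-- A semimetric `ρ` is continuous if the identity map `(X, d) → (X, ρ)` is continuous. -/
def ContinuousSemimetric {X : Type*} [MetricSpace X] (ρ : X → X → ℝ) : Prop :=
  IsSemimetric ρ ∧
    ∀ x : X, ∀ ε : ℝ, 0 < ε → ∃ δ : ℝ, 0 < δ ∧ ∀ y : X, dist x y < δ → ρ x y < ε

lemma IsSemimetric.nonneg' {X : Type*} {ρ : X → X → ℝ} (h : IsSemimetric ρ) (x y : X) :
    0 ≤ ρ x y := by
  have h1 := h.2.2 x y x
  rw [h.1, h.2.1 y x] at h1
  linarith

lemma ContinuousSemimetric.continuous_uncurry' {X : Type*} [MetricSpace X] {ρ : X → X → ℝ}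
    (h : ContinuousSemimetric ρ) : Continuous (fun p : X × X => ρ p.1 p.2) := by
  rw [Metric.continuous_iff]
  rintro ⟨x₀, y₀⟩ ε hε
  obtain ⟨δ₁, hδ₁, h₁⟩ := h.2 x₀ (ε / 2) (by linarith)
  obtain ⟨δ₂, hδ₂, h₂⟩ := h.2 y₀ (ε / 2) (by linarith)
  refine ⟨min δ₁ δ₂, lt_min hδ₁ hδ₂, ?_⟩
  rintro ⟨x, y⟩ hd
  rw [Prod.dist_eq] at hd
  simp only [max_lt_iff, lt_min_iff] at hd
  have hx : ρ x₀ x < ε / 2 := h₁ x (by rw [dist_comm]; exact hd.1.1)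
  have hy : ρ y₀ y < ε / 2 := h₂ y (by rw [dist_comm]; exact hd.2.2)
  have t1 : ρ x y ≤ ρ x₀ x + ρ x₀ y₀ + ρ y₀ y := by
    have a := h.1.2.2 x x₀ y
    have b := h.1.2.2 x₀ y₀ y
    rw [h.1.2.1 x x₀] at a
    linarith
  have t2 : ρ x₀ y₀ ≤ ρ x₀ x + ρ x y + ρ y₀ y := by
    have a := h.1.2.2 x₀ x y₀
    have b := h.1.2.2 x y y₀
    rw [h.1.2.1 y y₀] at b
    linarith
  rw [Real.dist_eq, abs_lt]
  constructor <;> linarith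

lemma ContinuousSemimetric.exists_bound' {X : Type*} [MetricSpace X] [CompactSpace X]
    {ρ : X → X → ℝ} (h : ContinuousSemimetric ρ) : ∃ R : ℝ, 0 < R ∧ ∀ x y, ρ x y ≤ R := by
  rcases isEmpty_or_nonempty X with hX | hX
  · exact ⟨1, one_pos, fun x => (IsEmpty.false x).elim⟩
  obtain ⟨p, -, hp⟩ := isCompact_univ.exists_isMaxOn univ_nonempty
    h.continuous_uncurry'.continuousOn
  exact ⟨max (ρ p.1 p.2) 1, lt_of_lt_of_le one_pos (le_max_right _ _),
    fun x y => le_trans (hp (mem_univ (x, y))) (le_max_left _ _)⟩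

lemma uniform_compare {X : Type*} [MetricSpace X] [CompactSpace X] {ρ d' : X → X → ℝ}
    (hρ : ContinuousSemimetric ρ) (hd' : ContinuousSemimetric d')
    (hm : ∀ x y : X, d' x y = 0 ↔ x = y) :
    ∀ ε : ℝ, 0 < ε → ∃ δ : ℝ, 0 < δ ∧ ∀ x y : X, d' x y < δ → ρ x y < ε := by
  intro ε hε
  set K : Set (X × X) := {p | ε ≤ ρ p.1 p.2} with hK
  have hKc : IsClosed K := isClosed_le continuous_const hρ.continuous_uncurry'
  rcases K.eq_empty_or_nonempty with he | hne
  · refine ⟨1, one_pos, fun x y _ => ?_⟩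
    by_contra hc
    push_neg at hc
    exact absurd (he ▸ (show (x, y) ∈ K from hc)) (notMem_empty _)
  · obtain ⟨p, hpK, hp⟩ := hKc.isCompact.exists_isMinOn hne
      hd'.continuous_uncurry'.continuousOn
    refine ⟨d' p.1 p.2, ?_, fun x y hxy => ?_⟩
    · rcases lt_or_eq_of_le (hd'.1.nonneg' p.1 p.2) with h0 | h0
      · exact h0
      · exfalso
        have heq := (hm p.1 p.2).mp h0.symm
        have hεle : ε ≤ ρ p.1 p.2 := hpK
        rw [heq, hρ.1.1 p.2] at hεle
        linarith
    · by_contra hc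
      push_neg at hc
      exact absurd (hp (show (x, y) ∈ K from hc)) (not_le.mpr hxy)

theorem boundedComplexity_of_boundedComplexity_metric
    (μ : Measure X) [IsProbabilityMeasure μ] [SMulInvariantMeasure G X μ]
    (F : ℕ → Finset G) (hF : FolnerSeq F)
    (d' : X → X → ℝ) (hd'semi : ContinuousSemimetric d')
    (hd'metric : ∀ x y : X, d' x y = 0 ↔ x = y)
    (hbc : BoundedComplexity μ F d') :
    ∀ ρ : X → X → ℝ, ContinuousSemimetric ρ → BoundedComplexity μ F ρ := by
  intro ρ hρ ε hε
  obtain ⟨R, hR, hRb⟩ := hρ.exists_bound'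
  obtain ⟨δ, hδ, hδb⟩ := uniform_compare hρ hd'semi hd'metric (ε / 4) (by linarith)
  set ε' : ℝ := min ε (ε * δ / (4 * R)) with hε'def
  have hε'pos : 0 < ε' := lt_min hε (by positivity)
  obtain ⟨M, hM⟩ := hbc ε' hε'pos
  refine ⟨M, fun n => ?_⟩
  obtain ⟨s, hs, hμ⟩ := hM n
  refine ⟨s, hs, ?_⟩
  have hsub : {y : X | ∃ x ∈ s, avgMetric (F n) d' x y < ε' / 2}
      ⊆ {y : X | ∃ x ∈ s, avgMetric (F n) ρ x y < ε / 2} := by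
    rintro y ⟨x, hxs, hxy⟩
    refine ⟨x, hxs, ?_⟩
    rcases (F n).eq_empty_or_nonempty with hFe | hFne
    · simp only [avgMetric, hFe, Finset.sum_empty, Finset.card_empty, Nat.cast_zero, zero_div]
      linarith
    · have hc : (0 : ℝ) < ((F n).card : ℝ) := by
        exact_mod_cast Finset.card_pos.mpr hFne
      have hterm : ∀ g ∈ F n, ρ (g • x) (g • y) ≤ ε / 4 + (R / δ) * d' (g • x) (g • y) := by
        intro g _
        by_cases hg : d' (g • x) (g • y) < δ
        · have h1 := hδb _ _ hg
          have h2 : 0 ≤ (R / δ) * d' (g • x) (g • y) :=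
            mul_nonneg (by positivity) (hd'semi.1.nonneg' _ _)
          linarith
        · push_neg at hg
          have h1 : ρ (g • x) (g • y) ≤ R := hRb _ _
          have h2 : R = (R / δ) * δ := by field_simp
          have h3 : (R / δ) * δ ≤ (R / δ) * d' (g • x) (g • y) :=
            mul_le_mul_of_nonneg_left hg (by positivity)
          linarith
      have hsum : (∑ g ∈ F n, ρ (g • x) (g • y))
          ≤ ((F n).card : ℝ) * (ε / 4) + (R / δ) * ∑ g ∈ F n, d' (g • x) (g • y) := by
        calc (∑ g ∈ F n, ρ (g • x) (g • y))
            ≤ ∑ g ∈ F n, (ε / 4 + (R / δ) * d' (g • x) (g • y)) :=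
              Finset.sum_le_sum hterm
          _ = ((F n).card : ℝ) * (ε / 4) + (R / δ) * ∑ g ∈ F n, d' (g • x) (g • y) := by
              rw [Finset.sum_add_distrib, Finset.sum_const, Finset.mul_sum]
              simp [mul_comm]
      have havg : avgMetric (F n) ρ x y ≤ ε / 4 + (R / δ) * avgMetric (F n) d' x y := by
        unfold avgMetric
        rw [div_le_iff₀ hc]
        calc (∑ g ∈ F n, ρ (g • x) (g • y))
            ≤ ((F n).card : ℝ) * (ε / 4) + (R / δ) * ∑ g ∈ F n, d' (g • x) (g • y) := hsum
          _ = (ε / 4 + (R / δ) * ((∑ g ∈ F n, d' (g • x) (g • y)) / ((F n).card : ℝ)))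
              * ((F n).card : ℝ) := by field_simp
      have hkey : (R / δ) * avgMetric (F n) d' x y < ε / 8 := by
        have h7 : ε' / 2 ≤ ε * δ / (4 * R) / 2 := by
          have := min_le_right ε (ε * δ / (4 * R)); linarith
        have h8 : (R / δ) * (ε * δ / (4 * R) / 2) = ε / 8 := by field_simp; ring
        calc (R / δ) * avgMetric (F n) d' x y
            < (R / δ) * (ε' / 2) := by
              exact mul_lt_mul_of_pos_left hxy (by positivity)
          _ ≤ (R / δ) * (ε * δ / (4 * R) / 2) :=
              mul_le_mul_of_nonneg_left h7 (by positivity)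
          _ = ε / 8 := h8
      linarith
  have hmono : (μ {y : X | ∃ x ∈ s, avgMetric (F n) d' x y < ε' / 2}).toReal
      ≤ (μ {y : X | ∃ x ∈ s, avgMetric (F n) ρ x y < ε / 2}).toReal :=
    ENNReal.toReal_mono (measure_ne_top μ _) (measure_mono hsub)
  have hεε' : ε' ≤ ε := min_le_left _ _
  linarith
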